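/- arXiv:1006.2723 — 7 statements merged into one kernel-verified Lean document; each statement's English description precedes it below -/
import Mathlib

section
/- Let A be a ring with no p-torsion (p a prime, multiplication by p injective on A). Then the ring of p-typical Witt vectors W(A) has no p-torsion. -/
/-!
Since `A` has no `p`-torsion, it embeds into `A[1/p]`, and `W` preserves injections, so `W(A)`
embeds into `W(A[1/p])`. There `p` is invertible, so the ghost map identifies `W(A[1/p])` with
the product ring `A[1/p]^ℕ`, on which multiplication by `p` is injective.
-/

open Function

theorem IsSMulRegular.isRegular_natCast {A : Type*} [CommRing A] {n : ℕ}
    (h : IsSMulRegular A n) : IsRegular (n : A) := by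
  rw [← isLeftRegular_iff_isRegular]
  simpa only [IsSMulRegular, IsLeftRegular, nsmul_eq_mul] using h

theorem IsRegular.algebraMap_away_injective {A : Type*} [CommRing A] {a : A} (ha : IsRegular a) :
    Injective (algebraMap A (Localization.Away a)) :=
  IsLocalization.injectiveₛ _ fun _ hm => by
    obtain ⟨n, rfl⟩ := (Submonoid.mem_powers_iff _ _).mp hm
    exact ha.pow n

namespace WittVector

variable {p : ℕ} [Fact p.Prime]

theorem isSMulRegular_of_isUnit {R : Type*} [CommRing R] (hp : IsUnit (p : R)) :
    IsSMulRegular (WittVector p R) p := by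
  have := hp.invertible
  refine IsSMulRegular.of_injective
    (ghostMap : WittVector p R →+* (ℕ → R)).toAddMonoidHom.toNatLinearMap
    (ghostMap.bijective_of_invertible p R).injective (Pi.isSMulRegular_iff.mpr fun _ => ?_)
  simpa only [IsSMulRegular, IsLeftRegular, nsmul_eq_mul] using hp.isRegular.left

theorem isSMulRegular_of_isSMulRegular {A : Type*} [CommRing A] (hA : IsSMulRegular A p) :
    IsSMulRegular (WittVector p A) p := by
  let f := algebraMap A (Localization.Away (p : A))
  have hp : IsUnit (p : Localization.Away (p : A)) := by
    simpa only [map_natCast] using IsLocalization.Away.algebraMap_isUnit (p : A)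
  exact IsSMulRegular.of_injective (WittVector.map f).toAddMonoidHom.toNatLinearMap
    (map_injective f hA.isRegular_natCast.algebraMap_away_injective) (isSMulRegular_of_isUnit hp)

end WittVector

/-- If a commutative ring `A` has no `p`-torsion, then the ring of `p`-typical
Witt vectors `W(A)` has no `p`-torsion. -/
theorem wittVector_no_p_torsion (p : ℕ) [Fact p.Prime] (A : Type*) [CommRing A]
    (hA : ∀ a : A, p • a = 0 → a = 0) :
    ∀ x : WittVector p A, p • x = 0 → x = 0 :=
  isSMulRegular_iff_right_eq_zero_of_smul.mp <|
    WittVector.isSMulRegular_of_isSMulRegular (isSMulRegular_iff_right_eq_zero_of_smul.mpr hA)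
end

section
/- Let A be a ring with no p-torsion such that A/pA is reduced. Then the p-adic completion = lim A/p^n A has no p-torsion and is reduced. -/
/-! If `p • x = 0` in the completion, a lift `a ∈ A` of `x` modulo `p ^ (n + 1)` satisfies
`p ^ (n + 1) ∣ p * a`, so `p ^ n ∣ a` because `p` is a non-zero-divisor: `x` vanishes modulo every
`p ^ n`. If `x ^ 2 = 0`, a lift `a` of `x` modulo `p ^ (2 * n)` satisfies `p ^ (2 * n) ∣ a ^ 2`.
Since `(p)` is a radical ideal, `a = p * b`, and cancelling `p ^ 2` gives `p ^ (2 * n - 2) ∣ b ^ 2`;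
by induction `p ^ n ∣ a`, so again `x` vanishes modulo every `p ^ n`. -/

namespace AdicCompletion

variable {R : Type*} [CommRing R] {I : Ideal R}

theorem evalₐ_eq_mk_of_le {m n : ℕ} (hnm : n ≤ m) {x : AdicCompletion I R} {a : R}
    (h : evalₐ I m x = Ideal.Quotient.mk _ a) : evalₐ I n x = Ideal.Quotient.mk _ a := by
  rw [← factor_eval_eq_evalₐ I x (by simp), eval_apply, ← transitionMap_comp_eval_apply I R hnm,
    ← eval_apply, ← factor_evalₐ_eq_eval I x (by simp), h]
  rfl

theorem eq_zero_of_forall_lift_mem {x : AdicCompletion I R} (k : ℕ → ℕ) (hk : ∀ n, n ≤ k n)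
    (h : ∀ n a, evalₐ I (k n) x = Ideal.Quotient.mk _ a → a ∈ I ^ n) : x = 0 := by
  refine ext_evalₐ fun n ↦ ?_
  obtain ⟨a, ha⟩ := Ideal.Quotient.mk_surjective (evalₐ I (k n) x)
  rw [evalₐ_eq_mk_of_le (hk n) ha.symm, _root_.map_zero, Ideal.Quotient.eq_zero_iff_mem]
  exact h n a ha.symm

end AdicCompletion

section

variable {R : Type*} [CommRing R] {π : R}

theorem Ideal.mem_span_singleton_pow {n : ℕ} {a : R} : a ∈ Ideal.span {π} ^ n ↔ π ^ n ∣ a := by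
  rw [Ideal.span_singleton_pow, Ideal.mem_span_singleton]

theorem IsLeftRegular.pow_dvd_of_pow_succ_dvd_mul (hπ : IsLeftRegular π) {n : ℕ} {a : R}
    (h : π ^ (n + 1) ∣ π * a) : π ^ n ∣ a := by
  rwa [pow_succ', hπ.dvd_cancel_left] at h

theorem IsRadical.pow_dvd_of_pow_two_mul_dvd_sq (hrad : IsRadical π) (hπ : IsLeftRegular π)
    {n : ℕ} {a : R} (h : π ^ (2 * n) ∣ a ^ 2) : π ^ n ∣ a := by
  induction n generalizing a with
  | zero => simp
  | succ n ih =>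
    obtain ⟨b, rfl⟩ : π ∣ a := hrad 2 a (dvd_trans (dvd_pow_self π (by omega)) h)
    have hb : π ^ (2 * n) ∣ b ^ 2 := by
      rwa [mul_pow, show 2 * (n + 1) = 2 + 2 * n by ring, pow_add,
        (hπ.pow 2).dvd_cancel_left] at h
    rw [pow_succ']
    exact mul_dvd_mul_left π (ih hb)

namespace AdicCompletion

theorem isSMulRegular_of_isLeftRegular (hπ : IsLeftRegular π) :
    IsSMulRegular (AdicCompletion (Ideal.span {π}) R) π := by
  refine isSMulRegular_iff_right_eq_zero_of_smul.mpr fun x hx ↦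
    eq_zero_of_forall_lift_mem (· + 1) (by omega) fun n a ha ↦ ?_
  have hπa : π ^ (n + 1) ∣ π * a := by
    rw [← Ideal.mem_span_singleton_pow, ← Ideal.Quotient.eq_zero_iff_mem, map_mul, ← ha,
      ← Ideal.Quotient.algebraMap_eq, ← Algebra.smul_def, ← map_smul, hx, _root_.map_zero]
  exact Ideal.mem_span_singleton_pow.mpr (hπ.pow_dvd_of_pow_succ_dvd_mul hπa)

theorem isReduced_of_isRadical (hrad : IsRadical π) (hπ : IsLeftRegular π) :
    IsReduced (AdicCompletion (Ideal.span {π}) R) := by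
  refine (isReduced_iff_pow_one_lt 2 one_lt_two).mpr fun x hx ↦
    eq_zero_of_forall_lift_mem (2 * ·) (by omega) fun n a ha ↦ ?_
  have ha2 : π ^ (2 * n) ∣ a ^ 2 := by
    rw [← Ideal.mem_span_singleton_pow, ← Ideal.Quotient.eq_zero_iff_mem, map_pow, ← ha,
      ← map_pow, hx, _root_.map_zero]
  exact Ideal.mem_span_singleton_pow.mpr (hrad.pow_dvd_of_pow_two_mul_dvd_sq hπ ha2)

end AdicCompletion

end

theorem adicCompletion_no_p_torsion_and_reduced_general (p : ℕ) (A : Type*) [CommRing A]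
    (htf : ∀ a : A, p • a = 0 → a = 0)
    (hred : IsReduced (A ⧸ Ideal.span {(p : A)})) :
    (∀ x : AdicCompletion (Ideal.span {(p : A)}) A, p • x = 0 → x = 0) ∧
      IsReduced (AdicCompletion (Ideal.span {(p : A)}) A) := by
  have hreg : IsLeftRegular (p : A) :=
    isLeftRegular_iff_right_eq_zero_of_mul.mpr fun a ha ↦ htf a (by rwa [nsmul_eq_mul])
  have hrad : IsRadical (p : A) :=
    isRadical_iff_span_singleton.mpr ((Ideal.isRadical_iff_quotient_reduced _).mpr hred)
  refine ⟨fun x hx ↦ ?_, AdicCompletion.isReduced_of_isRadical hrad hreg⟩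
  rw [← Nat.cast_smul_eq_nsmul A] at hx
  exact isSMulRegular_iff_right_eq_zero_of_smul.mp
    (AdicCompletion.isSMulRegular_of_isLeftRegular hreg) x hx

/-- If `A` has no `p`-torsion and `A/pA` is reduced, then the `p`-adic completion
`Â = lim A/p^nA` has no `p`-torsion and is reduced. -/
theorem adicCompletion_no_p_torsion_and_reduced (p : ℕ) [Fact p.Prime] (A : Type*) [CommRing A]
    (htf : ∀ a : A, p • a = 0 → a = 0)
    (hred : IsReduced (A ⧸ Ideal.span {(p : A)})) :
    (∀ x : AdicCompletion (Ideal.span {(p : A)}) A, p • x = 0 → x = 0) ∧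
      IsReduced (AdicCompletion (Ideal.span {(p : A)}) A) :=
  adicCompletion_no_p_torsion_and_reduced_general p A htf hred
end

section
/- Let A → B and B → C be ring homomorphisms which are flat with geometrically reduced fibres (reduced homomorphisms). Then the composition A → C is flat with geometrically reduced fibres. Moreover, if A → C and B → C are reduced and B → C is faithfully flat, then A → B is reduced. -/
/-!
Let `R` be reduced, `C` flat over `B` with reduced fibres, and `x ∈ R ⊗[B] C` nilpotent with
annihilator `I ≠ R`; pick a minimal prime `p ⊇ I`. The image of `x` in `κ(p) ⊗[B] C` vanishes, so
by flatness `x` comes from `J ⊗[B] C` for a finitely generated `J ≤ p`. Minimality of `p` gives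
`σ ∉ p` with `J ≤ √Ann(σ x)`, and then `J ^ N` kills `σ x`. Since `R` is reduced, multiplication by
generators of `J ^ N` embeds `J` into a finite power of `R`, and this embedding stays injective
after `⊗[B] C`; it sends the preimage of `σ x` to zero, so `σ x = 0`, i.e. `σ ∈ I ⊆ p`.

Applied to `R = B ⊗[A] L`, this gives the composition, using
`L ⊗[A] C ≃ (B ⊗[A] L) ⊗[B] C`. For descent, `B ⊗[A] L` embeds into `C ⊗[B] (B ⊗[A] L)` by faithful
flatness, and flatness of `A → B` is detected after `C ⊗[B] -`.
-/

open TensorProduct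

universe u

/-- A ring homomorphism `f : A → B` is *reduced* if it is flat and has geometrically reduced
fibres, i.e. `L ⊗_A B` is reduced for every field `L` equipped with an `A`-algebra structure
(equivalently, for every field extension of a residue field of `A`). -/
def IsReducedRingHom {A B : Type u} [CommRing A] [CommRing B] (f : A →+* B) : Prop :=
  (letI := f.toAlgebra; Module.Flat A B) ∧
    ∀ (L : Type u) (_ : Field L) (_ : Algebra A L),
      letI := f.toAlgebra
      IsReduced (L ⊗[A] B)

theorem Ideal.exists_notMem_mul_pow_mem_of_mem_minimalPrimes {R : Type*} [CommRing R]
    {I p : Ideal R} (hp : p ∈ I.minimalPrimes) {a : R} (ha : a ∈ p) :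
    ∃ s ∉ p, ∃ n : ℕ, s * a ^ n ∈ I := by
  have := hp.1.1
  by_contra! h
  have hT : Disjoint (I : Set R) (p.primeCompl ⊔ Submonoid.powers a : Submonoid R) := by
    refine Set.disjoint_right.2 fun r hr hrI => ?_
    obtain ⟨s, hs, _, ⟨n, rfl⟩, rfl⟩ := Submonoid.mem_sup.1 hr
    exact h s hs n hrI
  obtain ⟨q, hq, hIq, hqT⟩ := Ideal.exists_le_prime_disjoint I _ hT
  have hqp : q ≤ p := fun r hrq => by
    by_contra hrp
    exact Set.disjoint_left.1 hqT hrq (Submonoid.mem_sup_left (show r ∈ p.primeCompl from hrp))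
  exact Set.disjoint_left.1 hqT (hp.2 ⟨hq, hIq⟩ hqp ha)
    (Submonoid.mem_sup_right (Submonoid.mem_powers a))

theorem Ideal.exists_notMem_forall_mul_pow_mem_of_mem_minimalPrimes {R : Type*} [CommRing R]
    {I p : Ideal R} (hp : p ∈ I.minimalPrimes) (t : Finset R) (ht : ↑t ⊆ (p : Set R)) :
    ∃ s ∉ p, ∀ a ∈ t, ∃ n : ℕ, s * a ^ n ∈ I := by
  classical
  have := hp.1.1
  induction t using Finset.induction_on with
  | empty => exact ⟨1, p.primeCompl.one_mem, by simp⟩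
  | insert a t _ ih =>
    rw [Finset.coe_insert, Set.insert_subset_iff] at ht
    obtain ⟨s, hs, hst⟩ := ih ht.2
    obtain ⟨s', hs', n, hn⟩ := exists_notMem_mul_pow_mem_of_mem_minimalPrimes hp ht.1
    refine ⟨s' * s, p.primeCompl.mul_mem hs' hs, fun b hb => ?_⟩
    rcases Finset.mem_insert.1 hb with rfl | hb
    · exact ⟨n, by simpa only [mul_right_comm] using I.mul_mem_right s hn⟩
    · obtain ⟨m, hm⟩ := hst b hb
      exact ⟨m, by simpa only [mul_assoc] using I.mul_mem_left s' hm⟩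

theorem eq_zero_of_forall_mul_eq_zero_of_mem_radical_span {R : Type*} [CommRing R] [IsReduced R]
    {s : Set R} {b : R} (hb : b ∈ (Ideal.span s).radical) (h : ∀ g ∈ s, g * b = 0) : b = 0 := by
  obtain ⟨k, hk⟩ := hb
  have hspan : Ideal.span s ≤ (Ideal.span {b}).annihilator :=
    Ideal.span_le.2 fun g hg => (Submodule.mem_annihilator_span_singleton b g).2 (h g hg)
  exact IsReduced.eq_zero b
    ⟨k + 1, by rw [pow_succ]; exact (Submodule.mem_annihilator_span_singleton b _).1 (hspan hk)⟩

section RangeRTensor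

variable {B R C : Type*} [CommRing B] [CommRing R] [Algebra B R] [AddCommGroup C] [Module B C]

theorem Ideal.range_rTensor_subtype_mono {J J' : Ideal R} (h : J ≤ J') :
    LinearMap.range (AlgebraTensorModule.rTensor B C J.subtype) ≤
      LinearMap.range (AlgebraTensorModule.rTensor B C J'.subtype) := by
  rw [← Submodule.subtype_comp_inclusion J J' h, AlgebraTensorModule.rTensor_comp]
  exact LinearMap.range_comp_le_range _ _

theorem Ideal.exists_fg_le_and_mem_range_rTensor_subtype {J : Ideal R} {x : R ⊗[B] C}
    (hx : x ∈ LinearMap.range (AlgebraTensorModule.rTensor B C J.subtype)) :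
    ∃ J' ≤ J, J'.FG ∧ x ∈ LinearMap.range (AlgebraTensorModule.rTensor B C J'.subtype) := by
  obtain ⟨ξ, rfl⟩ := hx
  induction ξ using TensorProduct.induction_on with
  | zero => exact ⟨⊥, bot_le, Submodule.fg_bot, by simp⟩
  | tmul a c =>
    exact ⟨Ideal.span {a.1}, Ideal.span_le.2 (Set.singleton_subset_iff.2 a.2),
      Submodule.fg_span_singleton _, ⟨⟨a.1, Ideal.mem_span_singleton_self _⟩ ⊗ₜ c, rfl⟩⟩
  | add ξ ξ' h h' =>
    obtain ⟨J₁, hJ₁, hfg₁, hx₁⟩ := h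
    obtain ⟨J₂, hJ₂, hfg₂, hx₂⟩ := h'
    rw [map_add]
    exact ⟨J₁ ⊔ J₂, sup_le hJ₁ hJ₂, Submodule.FG.sup hfg₁ hfg₂,
      add_mem (range_rTensor_subtype_mono le_sup_left hx₁)
        (range_rTensor_subtype_mono le_sup_right hx₂)⟩

theorem eq_zero_of_mem_range_rTensor_subtype_of_le_radical [IsReduced R] [Module.Flat B C]
    {J : Ideal R} (hJ : J.FG) {x : R ⊗[B] C}
    (hx : x ∈ LinearMap.range (AlgebraTensorModule.rTensor B C J.subtype))
    (hJx : J ≤ (Ideal.torsionOf R _ x).radical) : x = 0 := by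
  classical
  obtain ⟨ξ, rfl⟩ := hx
  obtain ⟨N, hN⟩ := Ideal.exists_pow_le_of_le_radical_of_fg hJx hJ
  obtain ⟨s, hs⟩ := Ideal.FG.pow (n := N) hJ
  let φ : J →ₗ[R] (s → R) := LinearMap.pi fun g => g.1 • J.subtype
  have hφ : Function.Injective φ := by
    rw [← LinearMap.ker_eq_bot, LinearMap.ker_eq_bot']
    intro b hb
    refine Subtype.ext (eq_zero_of_forall_mul_eq_zero_of_mem_radical_span
      ⟨N, hs ▸ Ideal.pow_mem_pow b.2 N⟩ fun g hg => congr_fun hb ⟨g, hg⟩)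
  have hcomp (g : s) : LinearMap.proj g ∘ₗ (TensorProduct.piLeft B C fun _ : s => R).toLinearMap ∘ₗ
      (φ.restrictScalars B).rTensor C =
      (g.1 • AlgebraTensorModule.rTensor B C J.subtype).restrictScalars B := by
    apply TensorProduct.ext'
    intro a c
    simp [φ, TensorProduct.smul_tmul']
  have hξ : (φ.restrictScalars B).rTensor C ξ = 0 := by
    refine (TensorProduct.piLeft B C fun _ : s => R).injective (funext fun g => ?_)
    have hg : g.1 ∈ Ideal.torsionOf R _ (AlgebraTensorModule.rTensor B C J.subtype ξ) :=
      hN (hs ▸ Ideal.subset_span g.2)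
    have h := LinearMap.congr_fun (hcomp g) ξ
    rw [LinearMap.comp_apply, LinearMap.comp_apply, LinearMap.proj_apply,
      LinearEquiv.coe_coe] at h
    rw [h, map_zero, Pi.zero_apply]
    exact hg
  have hinj : Function.Injective ((φ.restrictScalars B).rTensor C) :=
    Module.Flat.rTensor_preserves_injective_linearMap (φ.restrictScalars B) hφ
  rw [hinj (hξ.trans (map_zero _).symm), map_zero]

theorem mem_range_rTensor_subtype_ker_of_rTensor_eq_zero [Module.Flat B C] {K : Type*}
    [Ring K] [Algebra B K] (f : R →ₐ[B] K) {x : R ⊗[B] C}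
    (hx : f.toLinearMap.rTensor C x = 0) :
    x ∈ LinearMap.range (AlgebraTensorModule.rTensor B C (RingHom.ker f).subtype) := by
  set I := RingHom.ker f
  have hexact := rTensor_exact C
    (f := I.subtype.restrictScalars B) (g := I.mkQ.restrictScalars B)
    (LinearMap.exact_subtype_mkQ I) (Submodule.mkQ_surjective I)
  have hfactor : f.toLinearMap = (Ideal.kerLiftAlg f).toLinearMap ∘ₗ I.mkQ.restrictScalars B := rfl
  rw [hfactor, LinearMap.rTensor_comp_apply] at hx
  exact (hexact x).1 (Module.Flat.rTensor_preserves_injective_linearMap _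
    (Ideal.kerLiftAlg_injective f) (hx.trans (map_zero _).symm))

end RangeRTensor

theorem isReduced_tensorProduct_of_flat {B R C : Type u} [CommRing B] [CommRing R] [CommRing C]
    [Algebra B R] [Algebra B C] [IsReduced R] [Module.Flat B C]
    (hfib : ∀ (L : Type u) (_ : Field L) (_ : Algebra B L), IsReduced (L ⊗[B] C)) :
    IsReduced (R ⊗[B] C) := by
  refine ⟨fun x hx => by_contra fun hx0 => ?_⟩
  set I := Ideal.torsionOf R _ x
  have hI : I ≠ ⊤ := fun h => hx0 (by simpa [I] using (Ideal.eq_top_iff_one I).1 h)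
  obtain ⟨p, hp⟩ := Ideal.nonempty_minimalPrimes hI
  have := hp.1.1
  let f := IsScalarTower.toAlgHom B R p.ResidueField
  have := hfib p.ResidueField inferInstance inferInstance
  have hfx : f.toLinearMap.rTensor C x = 0 :=
    (hx.map (Algebra.TensorProduct.map f (AlgHom.id B C))).eq_zero
  have hxp := mem_range_rTensor_subtype_ker_of_rTensor_eq_zero f hfx
  rw [show RingHom.ker f = p from Ideal.ker_algebraMap_residueField p] at hxp
  obtain ⟨J, hJp, ⟨t, rfl⟩, hxJ⟩ := Ideal.exists_fg_le_and_mem_range_rTensor_subtype hxp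
  obtain ⟨σ, hσp, hσt⟩ := Ideal.exists_notMem_forall_mul_pow_mem_of_mem_minimalPrimes hp t
    (Ideal.subset_span.trans hJp)
  have hσx : σ • x = 0 := by
    refine eq_zero_of_mem_range_rTensor_subtype_of_le_radical ⟨t, rfl⟩
      (Submodule.smul_mem _ σ hxJ) (Ideal.span_le.2 fun a ha => ?_)
    obtain ⟨n, hn⟩ := hσt a ha
    exact ⟨n, by rw [Ideal.mem_torsionOf_iff, smul_smul, mul_comm]; exact hn⟩
  exact hσp (hp.1.2 hσx)

section Tower

variable {A B C : Type u} [CommRing A] [CommRing B] [CommRing C] [Algebra A B] [Algebra B C]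
  [Algebra A C] [IsScalarTower A B C] (L : Type u) [CommRing L] [Algebra A L]

theorem isReduced_tensorProduct_of_isReduced_of_flat [Module.Flat B C]
    (hfib : ∀ (L : Type u) (_ : Field L) (_ : Algebra B L), IsReduced (L ⊗[B] C))
    [IsReduced (L ⊗[A] B)] : IsReduced (L ⊗[A] C) := by
  have : IsReduced (B ⊗[A] L) :=
    isReduced_of_injective _ (Algebra.TensorProduct.comm A B L).injective
  have : IsReduced ((B ⊗[A] L) ⊗[B] C) := isReduced_tensorProduct_of_flat hfib
  have : IsReduced (C ⊗[A] L) := isReduced_of_injective _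
    ((Algebra.TensorProduct.cancelBaseChange A B B C L).symm.trans
      (Algebra.TensorProduct.comm B C (B ⊗[A] L))).injective
  exact isReduced_of_injective _ (Algebra.TensorProduct.comm A L C).injective

theorem isReduced_tensorProduct_of_faithfullyFlat [Module.FaithfullyFlat B C]
    [IsReduced (L ⊗[A] C)] : IsReduced (L ⊗[A] B) := by
  have : IsReduced (C ⊗[A] L) :=
    isReduced_of_injective _ (Algebra.TensorProduct.comm A C L).injective
  have : IsReduced (C ⊗[B] (B ⊗[A] L)) :=
    isReduced_of_injective _ (Algebra.TensorProduct.cancelBaseChange A B B C L).injective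
  have : IsReduced (B ⊗[A] L) := isReduced_of_injective
    (Algebra.TensorProduct.includeRight : B ⊗[A] L →ₐ[B] C ⊗[B] (B ⊗[A] L))
    (Module.FaithfullyFlat.tensorProduct_mk_injective (B ⊗[A] L))
  exact isReduced_of_injective _ (Algebra.TensorProduct.comm A L B).injective

theorem Module.Flat.of_isScalarTower_of_faithfullyFlat [Module.Flat A C]
    [Module.FaithfullyFlat B C] : Module.Flat A B := by
  rw [Module.Flat.iff_lTensor_preserves_injective_linearMap]
  intro N P _ _ _ _ φ hφ
  have hcomm := congrArg DFunLike.coe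
    (AlgebraTensorModule.lTensor_comp_cancelBaseChange A B B (M := C) φ)
  have hinj : Function.Injective (LinearMap.lTensor C (AlgebraTensorModule.lTensor B B φ)) := by
    have := (Module.Flat.lTensor_preserves_injective_linearMap φ hφ).comp
      (AlgebraTensorModule.cancelBaseChange A B B C N).injective
    simp only [LinearMap.coe_comp, LinearEquiv.coe_coe] at hcomm
    rw [← AlgebraTensorModule.coe_lTensor (A := B), hcomm] at this
    exact this.of_comp
  exact (Module.FaithfullyFlat.lTensor_injective_iff_injective B C _).1 hinj

end Tower

/-- Reduced ring homomorphisms (flat with geometrically reduced fibres) are stable under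
composition; and if `g ∘ f` and `g` are reduced with `g` faithfully flat, then `f` is
reduced. -/
theorem isReducedRingHom_comp_and_descent {A B C : Type u}
    [CommRing A] [CommRing B] [CommRing C] (f : A →+* B) (g : B →+* C) :
    (IsReducedRingHom f → IsReducedRingHom g → IsReducedRingHom (g.comp f)) ∧
    (IsReducedRingHom (g.comp f) → IsReducedRingHom g →
      (letI := g.toAlgebra; Module.FaithfullyFlat B C) → IsReducedRingHom f) := by
  let := f.toAlgebra
  let := g.toAlgebra
  let := (g.comp f).toAlgebra
  have : IsScalarTower A B C := IsScalarTower.of_algebraMap_eq fun _ => rfl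
  constructor
  · rintro ⟨_, hf_fib⟩ ⟨_, hg_fib⟩
    refine ⟨Module.Flat.trans A B C, fun L _ _ => ?_⟩
    have := hf_fib L ‹_› ‹_›
    exact isReduced_tensorProduct_of_isReduced_of_flat L hg_fib
  · rintro ⟨_, hgf_fib⟩ - _
    refine ⟨Module.Flat.of_isScalarTower_of_faithfullyFlat (C := C), fun L _ _ => ?_⟩
    have := hgf_fib L ‹_› ‹_›
    exact isReduced_tensorProduct_of_faithfullyFlat (B := B) (C := C) L
end

section
/- Let R be a perfect ring of characteristic p, let n ≥ 2, and let M be a projective W_n(R)-module of finite type equipped with a Frobenius-linear map F : M → M and a Frobenius^{-1}-linear map V : M → M satisfying FV = p and VF = p. Then on M̄ = M/pM the induced maps F̄ and V̄ satisfy Ker(F̄) = Im(V̄) and Ker(V̄) = Im(F̄). -/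
open Function

/-- The ring homomorphism `W_n(R) → W_n(S)` induced by `f : R → S`. -/
noncomputable def truncatedWittVectorMap (p : ℕ) [Fact p.Prime] (n : ℕ)
    {R S : Type*} [CommRing R] [CommRing S] (f : R →+* S) :
    TruncatedWittVector p n R →+* TruncatedWittVector p n S :=
  RingHom.liftOfRightInverse (WittVector.truncate n) TruncatedWittVector.out
    TruncatedWittVector.truncateFun_out
    ⟨(WittVector.truncate n).comp (WittVector.map f), by
      intro x hx
      rw [WittVector.mem_ker_truncate] at hx
      rw [RingHom.mem_ker, RingHom.comp_apply, ← RingHom.mem_ker,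
        WittVector.mem_ker_truncate]
      intro i hi
      rw [WittVector.map_coeff, hx i hi, map_zero]⟩

/- In a perfect ring of characteristic `p` a Witt vector with vanishing zeroth coefficient is a
multiple of `p` (as `p = VF` and `F` is bijective). Since `p * (w₀, w₁, …) = (0, w₀ᵖ, w₁ᵖ, …)`, an
element of `W_n(R)`, `n ≥ 2`, killed by `p` has `w₀ = 0`, so `p`-torsion lies in `p W_n(R)`; this
passes to free modules coordinatewise and to their direct summands. Then if `F x = p m = F (V m)`,
the element `x - V m` lies in `Ker F`, so it is killed by `p = VF` and thus lies in `pM`. -/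

namespace TruncatedWittVector

variable {p : ℕ} [Fact p.Prime] {R : Type*} [CommRing R] [CharP R p] [PerfectRing R p]

theorem exists_eq_p_mul_of_p_mul_eq_zero {n : ℕ} (hn : 2 ≤ n) (a : TruncatedWittVector p n R)
    (ha : (p : TruncatedWittVector p n R) * a = 0) :
    ∃ b, a = (p : TruncatedWittVector p n R) * b := by
  obtain ⟨w, rfl⟩ := WittVector.truncate_surjective p n R a
  have hw0 : w.coeff 0 = 0 := by
    have h := (WittVector.mem_ker_truncate n (w * (p : WittVector p R))).mp
      (by rw [RingHom.mem_ker, map_mul, map_natCast, mul_comm, ha]) 1 (by omega)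
    rw [WittVector.mul_charP_coeff_succ] at h
    exact ((injective_frobenius R p).eq_iff' (map_zero _)).mp (by rwa [frobenius_def])
  obtain ⟨v, rfl⟩ := Ideal.mem_span_singleton'.mp
    ((WittVector.mem_span_p_iff_coeff_zero_eq_zero w).mpr hw0)
  exact ⟨WittVector.truncate n v, by rw [map_mul, map_natCast, mul_comm]⟩

end TruncatedWittVector

section TorsionInMultiples

variable {A : Type*} [Semiring A] (c : A)

theorem Finsupp.exists_eq_smul_of_smul_eq_zero {ι : Type*}
    (hA : ∀ a : A, c * a = 0 → ∃ b, a = c * b) (f : ι →₀ A) (hf : c • f = 0) :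
    ∃ g : ι →₀ A, f = c • g := by
  choose b hb using fun i => hA (f i) (by simpa using DFunLike.congr_fun hf i)
  refine ⟨f.sum fun i _ => Finsupp.single i (b i), ?_⟩
  rw [Finsupp.smul_sum]
  conv_lhs => rw [← f.sum_single]
  refine Finsupp.sum_congr fun i _ => ?_
  rw [Finsupp.smul_single, smul_eq_mul, ← hb]

theorem Module.Projective.exists_eq_smul_of_smul_eq_zero {M : Type*} [AddCommMonoid M]
    [Module A M] [Module.Projective A M] (hA : ∀ a : A, c * a = 0 → ∃ b, a = c * b) (x : M)
    (hx : c • x = 0) :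
    ∃ m : M, x = c • m := by
  obtain ⟨s, hs⟩ := Module.projective_def.mp ‹Module.Projective A M›
  obtain ⟨g, hg⟩ := Finsupp.exists_eq_smul_of_smul_eq_zero c hA (s x)
    (by rw [← map_smul, hx, map_zero])
  exact ⟨Finsupp.linearCombination A id g, by rw [← map_smul, ← hg, hs]⟩

end TorsionInMultiples

theorem AddMonoidHom.exists_apply_eq_nsmul_iff_of_comp_eq_nsmul {M : Type*} [AddCommGroup M]
    (c : ℕ) (F G : M →+ M) (hFG : ∀ x, F (G x) = c • x) (hGF : ∀ x, G (F x) = c • x)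
    (htors : ∀ x : M, c • x = 0 → ∃ m, x = c • m) (x : M) :
    (∃ m, F x = c • m) ↔ ∃ y m, x = G y + c • m := by
  constructor
  · rintro ⟨m, hm⟩
    have hker : F (x - G m) = 0 := by rw [map_sub, hm, hFG, sub_self]
    obtain ⟨m', hm'⟩ := htors (x - G m) (by rw [← hGF, hker, map_zero])
    exact ⟨m, m', by rw [← hm', add_sub_cancel]⟩
  · rintro ⟨y, m, rfl⟩
    exact ⟨y + F m, by rw [map_add, hFG, map_nsmul, smul_add]⟩

theorem kernel_image_mod_p_of_FV_general (p : ℕ) [Fact p.Prime]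
    (R : Type*) [CommRing R] [CharP R p] [PerfectRing R p] (n : ℕ) (hn : 2 ≤ n)
    (M : Type*) [AddCommGroup M] [Module (TruncatedWittVector p n R) M]
    [Module.Projective (TruncatedWittVector p n R) M]
    (F : M →ₛₗ[truncatedWittVectorMap p n (frobenius R p)] M)
    (V : M →ₛₗ[truncatedWittVectorMap p n ((frobeniusEquiv R p).symm : R →+* R)] M)
    (hFV : ∀ x : M, F (V x) = p • x)
    (hVF : ∀ x : M, V (F x) = p • x) :
    (∀ x : M, (∃ m, F x = p • m) ↔ ∃ y m, x = V y + p • m) ∧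
    (∀ x : M, (∃ m, V x = p • m) ↔ ∃ y m, x = F y + p • m) := by
  have htors : ∀ x : M, p • x = 0 → ∃ m, x = p • m := by
    simp_rw [← Nat.cast_smul_eq_nsmul (TruncatedWittVector p n R)]
    exact Module.Projective.exists_eq_smul_of_smul_eq_zero _
      (TruncatedWittVector.exists_eq_p_mul_of_p_mul_eq_zero hn)
  exact ⟨AddMonoidHom.exists_apply_eq_nsmul_iff_of_comp_eq_nsmul p F V hFV hVF htors,
    AddMonoidHom.exists_apply_eq_nsmul_iff_of_comp_eq_nsmul p V F hVF hFV htors⟩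

/-- Let `R` be a perfect ring of characteristic `p`, `n ≥ 2`, and `M` a finitely generated
projective `W_n(R)`-module with a Frobenius-linear map `F` and a Frobenius⁻¹-linear map `V`
satisfying `FV = p` and `VF = p`.  Then on `M̄ = M/pM` one has `Ker F̄ = Im V̄` and
`Ker V̄ = Im F̄` (expressed elementwise modulo `pM`). -/
theorem kernel_image_mod_p_of_FV (p : ℕ) [Fact p.Prime]
    (R : Type*) [CommRing R] [CharP R p] [PerfectRing R p] (n : ℕ) (hn : 2 ≤ n)
    (M : Type*) [AddCommGroup M] [Module (TruncatedWittVector p n R) M]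
    [Module.Projective (TruncatedWittVector p n R) M]
    [Module.Finite (TruncatedWittVector p n R) M]
    (F : M →ₛₗ[truncatedWittVectorMap p n (frobenius R p)] M)
    (V : M →ₛₗ[truncatedWittVectorMap p n ((frobeniusEquiv R p).symm : R →+* R)] M)
    (hFV : ∀ x : M, F (V x) = p • x)
    (hVF : ∀ x : M, V (F x) = p • x) :
    (∀ x : M, (∃ m, F x = p • m) ↔ ∃ y m, x = V y + p • m) ∧
    (∀ x : M, (∃ m, V x = p • m) ↔ ∃ y m, x = F y + p • m) :=
  kernel_image_mod_p_of_FV_general p R n hn M F V hFV hVF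
end

section
/- Let R be an F_p-algebra. Define P_1 = W_n(R) with F-structure given by (F, F_1) = (f, p·f) on (P,Q) = (W_n(R), W_n(R)) (the truncated display of Z/p^nZ), and P_2 = (W_n(R), I_{n+1,R}) with (F_1, F) = (f_1, f) (the truncated display of μ_{p^n}). Then every homomorphism of truncated displays P_1 → P_2 is zero. Concretely: if a ∈ I_{n+1,R} satisfies f_1(a) = i(a), where i : I_{n+1,R} → W_n(R) is the restriction map, then a = 0. -/
/-- The Verschiebung on truncated Witt vectors, sending `(a₀, …, a_{n-1})` to
`(0, a₀, …, a_{n-1})`. -/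
noncomputable def truncatedVerschiebung (p : ℕ) [Fact p.Prime] {R : Type*} [CommRing R] {n : ℕ}
    (x : TruncatedWittVector p n R) : TruncatedWittVector p (n + 1) R :=
  TruncatedWittVector.mk p (fun i => Fin.cases 0 (fun j => x.coeff j) i)

/-!
If `a = V(i(a))`, then the `k`-th coefficient of `a` is the `(k-1)`-st coefficient of `a`
itself, and the `0`-th coefficient of any `V`-image vanishes; so all coefficients vanish,
by induction on their index.
-/

section

variable {p : ℕ} [Fact p.Prime] {R : Type*} [CommRing R] {n : ℕ}

@[simp]
theorem truncatedVerschiebung_coeff_zero (x : TruncatedWittVector p n R) :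
    (truncatedVerschiebung p x).coeff 0 = 0 := by
  simp [truncatedVerschiebung]

@[simp]
theorem truncatedVerschiebung_coeff_succ (x : TruncatedWittVector p n R) (j : Fin n) :
    (truncatedVerschiebung p x).coeff j.succ = x.coeff j := by
  simp [truncatedVerschiebung]

theorem eq_zero_of_truncatedVerschiebung_truncate_eq (a : TruncatedWittVector p (n + 1) R)
    (ha : truncatedVerschiebung p (TruncatedWittVector.truncate (Nat.le_succ n) a) = a) :
    a = 0 := by
  ext ⟨k, hk⟩
  rw [TruncatedWittVector.coeff_zero]
  induction k with
  | zero => simpa using congrArg (TruncatedWittVector.coeff 0) ha.symm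
  | succ k ih =>
    have hkn : k < n := Nat.lt_of_succ_lt_succ hk
    calc a.coeff ⟨k + 1, hk⟩
        = (truncatedVerschiebung p (TruncatedWittVector.truncate (Nat.le_succ n) a)).coeff
            (Fin.succ ⟨k, hkn⟩) := by rw [ha]; rfl
      _ = a.coeff ⟨k, by omega⟩ := by
        rw [truncatedVerschiebung_coeff_succ, TruncatedWittVector.coeff_truncate]; rfl
      _ = 0 := ih (by omega)

end

theorem hom_display_zpn_to_mupn_zero_general (p : ℕ) [Fact p.Prime]
    (R : Type*) [CommRing R] (n : ℕ)
    (a : TruncatedWittVector p (n + 1) R)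
    (b : TruncatedWittVector p n R) (hb : truncatedVerschiebung p b = a)
    (h : b = TruncatedWittVector.truncate (Nat.le_succ n) a) :
    a = 0 := by
  subst h
  exact eq_zero_of_truncatedVerschiebung_truncate_eq a hb

/-- Every homomorphism from the truncated display of `ℤ/pⁿℤ` to that of `μ_{pⁿ}` is zero.
Concretely: if `a ∈ I_{n+1,R}` (an element of `W_{n+1}(R)` with vanishing first component)
satisfies `f₁(a) = i(a)`, where `f₁` is the inverse of Verschiebung (i.e. `b` with `V b = a`)
and `i : I_{n+1,R} → W_n(R)` is the restriction map, then `a = 0`. -/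
theorem hom_display_zpn_to_mupn_zero (p : ℕ) [Fact p.Prime]
    (R : Type*) [CommRing R] [CharP R p] (n : ℕ)
    (a : TruncatedWittVector p (n + 1) R) (ha : a.coeff 0 = 0)
    (b : TruncatedWittVector p n R) (hb : truncatedVerschiebung p b = a)
    (h : b = TruncatedWittVector.truncate (Nat.le_succ n) a) :
    a = 0 :=
  hom_display_zpn_to_mupn_zero_general p R n a b hb h
end

section
/- Let R be a ring in which p is nilpotent and R → R' a faithfully flat homomorphism such that Spec R' → Spec R is a finite product of localizations (a Zariski covering by principal opens). Then W_n(R) → W_n(R') is also a finite product of localizations of W_n(R) covering Spec W_n(R); in particular descent of finite projective modules along W_n(R) → W_n(R') is effective. -/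
/-!
Multiplication by a Teichmüller lift acts coordinatewise, `([a] * x)ᵢ = a ^ p ^ i * xᵢ`; this is
checked on the universal ring `ℤ[a, x₀, x₁, …]`, which embeds into a ring where the ghost map is
injective. Consequently inverting `[g]` in `W_n(R)` amounts to inverting `g` in every coordinate,
i.e. `W_n(R_g)` is the localization of `W_n(R)` away from `[g]`.

If `p` is nilpotent in `R`, the kernel of `W_n(R) → R` is nil, so an element of `W_n(R)` is a unit
as soon as its first coordinate is. A relation `∑ cᵢ gᵢ = 1` in `R` therefore lifts to the unit
`∑ [cᵢ][gᵢ]` of `W_n(R)`, and the `[gᵢ]` generate the unit ideal.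
-/

open WittVector

namespace WittVector

variable {p : ℕ} [Fact p.Prime] {R : Type*} [CommRing R]

theorem teichmuller_mul_eq_mk_of_invertible [Invertible (p : R)] (a : R) (x : WittVector p R) :
    teichmuller p a * x = mk p fun i => a ^ p ^ i * x.coeff i := by
  apply (ghostMap.bijective_of_invertible p R).1
  funext k
  rw [map_mul, Pi.mul_apply, ghostMap_apply, ghostMap_apply, ghostMap_apply,
    ghostComponent_teichmuller, ghostComponent_apply, ghostComponent_apply,
    aeval_wittPolynomial, aeval_wittPolynomial, Finset.mul_sum]
  refine Finset.sum_congr rfl fun i hi => ?_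
  obtain ⟨d, rfl⟩ := Nat.exists_eq_add_of_le (Nat.lt_succ_iff.mp (Finset.mem_range.mp hi))
  simp only [coeff_mk, mul_pow, ← pow_mul, ← pow_add, Nat.add_sub_cancel_left]
  ring

private theorem teichmuller_mul_universal :
    teichmuller p (MvPolynomial.X none : MvPolynomial (Option ℕ) ℤ) *
        mk p (fun i => MvPolynomial.X (some i)) =
      mk p fun i => MvPolynomial.X none ^ p ^ i * MvPolynomial.X (some i) := by
  refine map_injective (MvPolynomial.map (Int.castRingHom ℚ))
    (MvPolynomial.map_injective _ Int.cast_injective) ?_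
  rw [map_mul, map_teichmuller, teichmuller_mul_eq_mk_of_invertible]
  ext i
  simp [map_coeff]

theorem teichmuller_mul_coeff (a : R) (x : WittVector p R) (i : ℕ) :
    (teichmuller p a * x).coeff i = a ^ p ^ i * x.coeff i := by
  let φ : MvPolynomial (Option ℕ) ℤ →+* R :=
    MvPolynomial.eval₂Hom (Int.castRingHom R) fun o => o.elim a x.coeff
  have hx : map φ (mk p fun i => MvPolynomial.X (some i)) = x := by
    ext j
    simp [φ, map_coeff]
  have ha : φ (MvPolynomial.X none) = a := MvPolynomial.eval₂_X _ _ _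
  have h := congrArg (map φ) (teichmuller_mul_universal (p := p))
  rw [map_mul, map_teichmuller, hx, ha] at h
  rw [h, map_coeff]
  simp [φ]

theorem verschiebung_pow_succ (y : WittVector p R) (s : ℕ) :
    verschiebung y ^ (s + 1) = verschiebung (y ^ (s + 1) * (p : WittVector p R) ^ s) := by
  induction s with
  | zero => simp
  | succ s ih =>
    rw [pow_succ, ih, ← verschiebung_mul_frobenius, frobenius_verschiebung]
    ring_nf

theorem truncate_verschiebung_eq_zero {n : ℕ} {y : WittVector p R} (hy : truncate n y = 0) :
    truncate (n + 1) (verschiebung y) = 0 := by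
  rw [← RingHom.mem_ker, mem_ker_truncate] at hy ⊢
  rintro (_ | i) hi
  · exact verschiebung_coeff_zero y
  · rw [verschiebung_coeff_succ]
    exact hy i (Nat.succ_lt_succ_iff.mp hi)

/-- Writing `x = V y`, the power `x ^ (k + 1) = V (y ^ (k + 1) * p ^ k)` is `V` of an element with
vanishing constant coefficient, to which induction on `n` applies. -/
theorem isNilpotent_truncate_of_coeff_zero_eq_zero {k : ℕ} (hk : (p : R) ^ k = 0) (n : ℕ)
    {x : WittVector p R} (hx : x.coeff 0 = 0) : IsNilpotent (truncate n x) := by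
  induction n generalizing x with
  | zero => exact ⟨1, TruncatedWittVector.ext fun i => i.elim0⟩
  | succ n ih =>
    set z : WittVector p R := x.shift 1 ^ (k + 1) * (p : WittVector p R) ^ k
    have hz : z.coeff 0 = 0 := by
      rw [← constantCoeff_apply, map_mul, map_pow, map_pow, map_natCast, hk, mul_zero]
    obtain ⟨s, hs⟩ := ih hz
    have hxz : x ^ (k + 1) = verschiebung z := by
      rw [eq_iterate_verschiebung (x := x) (n := 1) (by simpa using hx), Function.iterate_one,
        verschiebung_pow_succ]
    refine ⟨(k + 1) * (s + 1), ?_⟩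
    rw [← map_pow, pow_mul, hxz, verschiebung_pow_succ]
    exact truncate_verschiebung_eq_zero (by rw [map_mul, map_pow, pow_succ, hs, zero_mul, zero_mul])

theorem isUnit_truncate_of_isUnit_coeff_zero {k : ℕ} (hk : (p : R) ^ k = 0) (n : ℕ)
    {x : WittVector p R} (hx : IsUnit (x.coeff 0)) : IsUnit (truncate n x) := by
  obtain ⟨u, hu⟩ := hx
  have h1 : (1 - x * teichmuller p (↑u⁻¹ : R)).coeff 0 = 0 := by
    rw [← constantCoeff_apply, map_sub, map_one, map_mul, constantCoeff_apply, constantCoeff_apply,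
      teichmuller_coeff_zero, ← hu, Units.mul_inv, sub_self]
  have h := (isNilpotent_truncate_of_coeff_zero_eq_zero hk n h1).isUnit_one_sub
  rw [map_sub, map_one, sub_sub_cancel, map_mul] at h
  exact isUnit_of_mul_isUnit_left h

theorem span_range_truncate_teichmuller_eq_top {k : ℕ} (hk : (p : R) ^ k = 0) (n : ℕ)
    {ι : Type*} {g : ι → R} (hg : Ideal.span (Set.range g) = ⊤) :
    Ideal.span (Set.range fun i => truncate n (teichmuller p (g i))) = ⊤ := by
  set J := Ideal.span (Set.range fun i => teichmuller p (g i))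
  have hJ : (1 : R) ∈ J.map constantCoeff := by
    rw [Ideal.map_span, ← Set.range_comp]
    simp [Function.comp_def, hg]
  obtain ⟨u, huJ, hu⟩ := (Ideal.mem_map_iff_of_surjective _ (constantCoeff_surjective p)).mp hJ
  have hmem : truncate n u ∈ J.map (truncate n) := Ideal.mem_map_of_mem _ huJ
  rw [Ideal.map_span, ← Set.range_comp] at hmem
  have hu_unit : IsUnit (constantCoeff u) := hu ▸ isUnit_one
  exact Ideal.eq_top_of_isUnit_mem _ hmem (isUnit_truncate_of_isUnit_coeff_zero hk n hu_unit)

end WittVector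

theorem IsLocalization.Away.exists_of_forall_eq {R S : Type*} [CommRing R] [CommRing S]
    [Algebra R S] (g : R) [IsLocalization.Away g S] {ι : Type*} [Fintype ι] {a b : ι → R}
    (h : ∀ i, algebraMap R S (a i) = algebraMap R S (b i)) :
    ∃ N : ℕ, ∀ i, g ^ N * a i = g ^ N * b i := by
  choose e he using fun i => IsLocalization.Away.exists_of_eq g (h i)
  refine ⟨∑ i, e i, fun i => ?_⟩
  obtain ⟨d, hd⟩ := Nat.exists_eq_add_of_le'
    (Finset.single_le_sum (fun j _ => Nat.zero_le (e j)) (Finset.mem_univ i))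
  rw [hd, pow_add, mul_assoc, mul_assoc, he i]

theorem TruncatedWittVector.coeff_truncate_teichmuller_mul {p : ℕ} [Fact p.Prime] {n : ℕ}
    {R : Type*} [CommRing R] (a : R) (x : TruncatedWittVector p n R) (i : Fin n) :
    (WittVector.truncate n (teichmuller p a) * x).coeff i = a ^ p ^ (i : ℕ) * x.coeff i := by
  obtain ⟨x, rfl⟩ := WittVector.truncate_surjective (p := p) (R := R) n x
  rw [← map_mul, WittVector.coeff_truncate, teichmuller_mul_coeff, WittVector.coeff_truncate]

section TruncatedWittVectorMap

variable {p : ℕ} [Fact p.Prime] {n : ℕ} {R S : Type*} [CommRing R] [CommRing S]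

theorem truncatedWittVectorMap_truncate (f : R →+* S) (x : WittVector p R) :
    truncatedWittVectorMap p n f (truncate n x) = truncate n (WittVector.map f x) :=
  RingHom.liftOfRightInverse_comp_apply _ _ _ _ x

theorem coeff_truncatedWittVectorMap (f : R →+* S) (x : TruncatedWittVector p n R) (i : Fin n) :
    (truncatedWittVectorMap p n f x).coeff i = f (x.coeff i) := by
  obtain ⟨x, rfl⟩ := truncate_surjective (p := p) (R := R) n x
  rw [truncatedWittVectorMap_truncate, coeff_truncate, map_coeff, coeff_truncate]

theorem exists_truncatedWittVectorMap_eq_of_coeff_mem_rangeS (f : R →+* S)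
    {z : TruncatedWittVector p n S} (hz : ∀ i, z.coeff i ∈ f.rangeS) :
    ∃ x, truncatedWittVectorMap p n f x = z := by
  choose a ha using hz
  exact ⟨TruncatedWittVector.mk p a, TruncatedWittVector.ext fun i => by
    rw [coeff_truncatedWittVectorMap, TruncatedWittVector.coeff_mk, ha]⟩

theorem isLocalizationAway_truncate_teichmuller [Algebra R S] (g : R)
    [IsLocalization.Away g S] :
    letI : Algebra (TruncatedWittVector p n R) (TruncatedWittVector p n S) :=
      (truncatedWittVectorMap p n (algebraMap R S)).toAlgebra
    IsLocalization.Away (truncate n (teichmuller p g)) (TruncatedWittVector p n S) := by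
  let : Algebra (TruncatedWittVector p n R) (TruncatedWittVector p n S) :=
    (truncatedWittVectorMap p n (algebraMap R S)).toAlgebra
  have hpow : ∀ N : ℕ, algebraMap _ (TruncatedWittVector p n S) (truncate n (teichmuller p g)) ^ N =
      truncate n (teichmuller p (algebraMap R S g ^ N)) := fun N => by
    rw [RingHom.algebraMap_toAlgebra, truncatedWittVectorMap_truncate, map_teichmuller,
      ← map_pow, ← map_pow]
  have hp_pow : ∀ i : ℕ, p ^ i ≠ 0 := fun i => pow_ne_zero i (Fact.out : p.Prime).ne_zero
  refine IsLocalization.Away.mk _ ?_ (fun z => ?_) (fun x y hxy => ?_)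
  · rw [← pow_one (algebraMap _ _ _), hpow, pow_one]
    exact ((IsLocalization.Away.algebraMap_isUnit g).map (teichmuller p)).map (truncate n)
  · obtain ⟨⟨_, N, rfl⟩, hN⟩ :=
      IsLocalization.exist_integer_multiples_of_finite (Submonoid.powers g)
        fun i : Fin n => z.coeff i
    obtain ⟨x, hx⟩ := exists_truncatedWittVectorMap_eq_of_coeff_mem_rangeS (algebraMap R S)
      (z := truncate n (teichmuller p (algebraMap R S g ^ N)) * z) fun i => by
        rw [TruncatedWittVector.coeff_truncate_teichmuller_mul, ← pow_sub_one_mul (hp_pow i),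
          mul_assoc]
        refine Subsemiring.mul_mem _
          (Subsemiring.pow_mem _ (Subsemiring.pow_mem _ (RingHom.mem_rangeS_self _ g) _) _) ?_
        simpa [Algebra.smul_def, IsLocalization.IsInteger] using hN i
    refine ⟨N, x, ?_⟩
    rw [hpow, mul_comm]
    exact hx.symm
  · obtain ⟨N, hN⟩ := IsLocalization.Away.exists_of_forall_eq (S := S) g
      (a := fun i => x.coeff i) (b := fun i => y.coeff i) fun i => by
        simpa only [RingHom.algebraMap_toAlgebra, coeff_truncatedWittVectorMap]
          using congrArg (·.coeff i) hxy
    refine ⟨N, TruncatedWittVector.ext fun i => ?_⟩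
    rw [← map_pow, ← map_pow, TruncatedWittVector.coeff_truncate_teichmuller_mul,
      TruncatedWittVector.coeff_truncate_teichmuller_mul, ← pow_sub_one_mul (hp_pow i), mul_assoc,
      mul_assoc, hN i]

end TruncatedWittVectorMap

/-- Let `R` be a ring in which `p` is nilpotent, and let `Spec R` be covered by the principal
opens attached to `g₁, …, g_m ∈ R`.  Then for each `i` the ring `W_n((R_{gᵢ}))` is the
localization of `W_n(R)` away from the Teichmüller lift `[gᵢ]`, and the Teichmüller lifts
`[g₁], …, [g_m]` generate the unit ideal of `W_n(R)`; i.e. `W_n(R) → ∏ᵢ W_n(R_{gᵢ})` is again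
a finite covering of `Spec W_n(R)` by localizations. -/
theorem truncatedWittVector_localization_cover (p : ℕ) [Fact p.Prime] (n : ℕ)
    (R : Type) [CommRing R] (hpnil : ∃ k : ℕ, (p : R) ^ k = 0)
    (m : ℕ) (g : Fin m → R) (hcov : Ideal.span (Set.range g) = ⊤) :
    (∀ i : Fin m,
      letI : Algebra (TruncatedWittVector p n R)
          (TruncatedWittVector p n (Localization.Away (g i))) :=
        (truncatedWittVectorMap p n (algebraMap R (Localization.Away (g i)))).toAlgebra
      IsLocalization.Away (WittVector.truncate n (WittVector.teichmuller p (g i)))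
        (TruncatedWittVector p n (Localization.Away (g i)))) ∧
    Ideal.span (Set.range fun i : Fin m =>
      WittVector.truncate n (WittVector.teichmuller p (g i))) = ⊤ := by
  obtain ⟨k, hk⟩ := hpnil
  exact ⟨fun i => isLocalizationAway_truncate_teichmuller (g i),
    span_range_truncate_teichmuller_eq_top hk n hcov⟩
end

section
/- Let R be a ring in which p is nilpotent. Then the kernel I_{n,R} of the projection W_n(R) → R is a nilpotent ideal, and consequently the continuous map Spec R → Spec W_n(R) induced by the projection is a homeomorphism; an element of W_n(R) is invertible if and only if its image in R is invertible. -/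
/-!
The kernel of `W_{n+1}(R) → R` is the image of `V(W(R))`, and `V x * V y = p * V (x * y)`, so its
square lies in `(p)`. Multiplying by `p ^ k` (fixed by Frobenius, with zeroth coefficient
`p ^ k = 0` in `R`) pushes `V^i W(R)` into `V^(i+1) W(R)`, hence `p ^ (k * (n + 1)) = 0` in
`W_{n+1}(R)` and the kernel is nilpotent. A surjection with nilpotent kernel induces a
homeomorphism on prime spectra and reflects units.
-/

/-- The projection `W_{n+1}(R) → R`, `(a₀, …, a_n) ↦ a₀`, as a ring homomorphism. -/
noncomputable def truncatedWittVectorProj (p : ℕ) [Fact p.Prime] (n : ℕ)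
    (R : Type*) [CommRing R] : TruncatedWittVector p (n + 1) R →+* R :=
  RingHom.liftOfRightInverse (WittVector.truncate (n + 1)) TruncatedWittVector.out
    TruncatedWittVector.truncateFun_out
    ⟨WittVector.ghostComponent 0, by
      intro x hx
      rw [WittVector.mem_ker_truncate] at hx
      rw [RingHom.mem_ker, WittVector.ghostComponent_apply, wittPolynomial_zero,
        MvPolynomial.aeval_X]
      exact hx 0 n.succ_pos⟩

theorem Ideal.le_nilradical_of_isNilpotent {A : Type*} [CommSemiring A] {I : Ideal A}
    (hI : IsNilpotent I) : I ≤ nilradical A :=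
  let ⟨n, hn⟩ := hI
  fun _ hx ↦ ⟨n, hn ▸ Ideal.pow_mem_pow hx n⟩

theorem PrimeSpectrum.isHomeomorph_comap_of_surjective {A B : Type*} [CommRing A] [CommRing B]
    {f : A →+* B} (hf : Function.Surjective f) (hker : RingHom.ker f ≤ nilradical A) :
    IsHomeomorph (PrimeSpectrum.comap f) :=
  PrimeSpectrum.isHomeomorph_comap f (fun x ↦ ⟨1, one_pos, by simpa using hf x⟩) hker

theorem RingHom.isUnit_map_iff_of_surjective_of_isNilpotent_ker {A B : Type*} [CommRing A]
    [CommRing B] {f : A →+* B} (hf : Function.Surjective f) (hker : IsNilpotent (RingHom.ker f))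
    (x : A) : IsUnit (f x) ↔ IsUnit x := by
  rw [← hker.isUnit_quotient_mk_iff, ← RingHom.quotientKerEquivOfSurjective_apply_mk hf,
    isUnit_map_iff]

namespace WittVector

variable {p : ℕ} [Fact p.Prime] {R : Type*} [CommRing R]

theorem ghostComponent_zero_eq_constantCoeff :
    ghostComponent 0 = (constantCoeff : WittVector p R →+* R) := by
  ext x
  rw [ghostComponent_apply, wittPolynomial_zero, MvPolynomial.aeval_X, constantCoeff_apply]

theorem eq_verschiebung_shift_one {x : WittVector p R} (hx : x.coeff 0 = 0) :
    x = verschiebung (x.shift 1) :=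
  eq_iterate_verschiebung (n := 1) (by simpa using hx)

theorem verschiebung_mul_verschiebung (x y : WittVector p R) :
    verschiebung x * verschiebung y = p * verschiebung (x * y) := by
  rw [← verschiebung_mul_frobenius, frobenius_verschiebung, ← mul_assoc, mul_comm,
    ← nsmul_eq_mul, ← nsmul_eq_mul, map_nsmul]

theorem sq_ker_constantCoeff_le_span_p :
    RingHom.ker (constantCoeff : WittVector p R →+* R) ^ 2 ≤
      Ideal.span {(p : WittVector p R)} := by
  rw [sq, Ideal.mul_le]
  intro x hx y hy
  rw [eq_verschiebung_shift_one hx, eq_verschiebung_shift_one hy, verschiebung_mul_verschiebung]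
  exact Ideal.mul_mem_right _ _ (Ideal.mem_span_singleton_self _)

theorem natCast_pow_mul_mem_ker_truncate_succ {k i : ℕ} (hk : (p : R) ^ k = 0)
    {x : WittVector p R} (hx : x ∈ RingHom.ker (truncate (p := p) i)) :
    (p : WittVector p R) ^ k * x ∈ RingHom.ker (truncate (p := p) (i + 1)) := by
  have hFp : frobenius^[i] ((p : WittVector p R) ^ k) = (p : WittVector p R) ^ k :=
    Function.iterate_fixed (by rw [map_pow, map_natCast]) i
  rw [mem_ker_truncate] at hx ⊢
  rw [eq_iterate_verschiebung hx, mul_comm, iterate_verschiebung_mul_left, hFp]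
  intro j hj
  rcases Nat.lt_succ_iff_lt_or_eq.mp hj with hj | rfl
  · exact iterate_verschiebung_coeff_eq_zero _ hj
  · have hcoeff := iterate_verschiebung_coeff (x.shift j * (p : WittVector p R) ^ k) j 0
    rw [zero_add] at hcoeff
    rw [hcoeff, mul_coeff_zero]
    have hpk : ((p : WittVector p R) ^ k).coeff 0 = 0 := by
      rw [← constantCoeff_apply, map_pow, map_natCast, hk]
    rw [hpk, mul_zero]

theorem natCast_pow_mem_ker_truncate {k : ℕ} (hk : (p : R) ^ k = 0) (i : ℕ) :
    (p : WittVector p R) ^ (k * i) ∈ RingHom.ker (truncate (p := p) i) := by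
  induction i with
  | zero => exact (mem_ker_truncate _ _).mpr fun _ h ↦ absurd h (Nat.not_lt_zero _)
  | succ i ih =>
    rw [Nat.mul_succ, pow_add, mul_comm]
    exact natCast_pow_mul_mem_ker_truncate_succ hk ih

end WittVector

section TruncatedWittVectorProj

open WittVector

variable {p : ℕ} [Fact p.Prime] {n : ℕ} {R : Type*} [CommRing R]

theorem truncatedWittVectorProj_comp_truncate :
    (truncatedWittVectorProj p n R).comp (truncate (n + 1)) = constantCoeff :=
  (RingHom.liftOfRightInverse_comp _ _ _ _).trans ghostComponent_zero_eq_constantCoeff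

theorem truncatedWittVectorProj_surjective :
    Function.Surjective (truncatedWittVectorProj p n R) := by
  refine Function.Surjective.of_comp (g := truncate (n + 1)) ?_
  rw [← RingHom.coe_comp, truncatedWittVectorProj_comp_truncate]
  exact constantCoeff_surjective p

theorem ker_truncatedWittVectorProj :
    RingHom.ker (truncatedWittVectorProj p n R) =
      (RingHom.ker (constantCoeff : WittVector p R →+* R)).map (truncate (n + 1)) := by
  rw [← truncatedWittVectorProj_comp_truncate (n := n), ← RingHom.comap_ker,
    Ideal.map_comap_of_surjective _ (truncate_surjective p (n + 1) R)]

theorem isNilpotent_ker_truncatedWittVectorProj {k : ℕ} (hk : (p : R) ^ k = 0) :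
    IsNilpotent (RingHom.ker (truncatedWittVectorProj p n R)) := by
  refine ⟨2 * (k * (n + 1)), ?_⟩
  rw [ker_truncatedWittVectorProj, ← Ideal.map_pow, Ideal.zero_eq_bot,
    Ideal.map_eq_bot_iff_le_ker]
  calc RingHom.ker constantCoeff ^ (2 * (k * (n + 1)))
      = (RingHom.ker constantCoeff ^ 2) ^ (k * (n + 1)) := pow_mul _ _ _
    _ ≤ Ideal.span {(p : WittVector p R)} ^ (k * (n + 1)) :=
      Ideal.pow_right_mono sq_ker_constantCoeff_le_span_p _
    _ = Ideal.span {(p : WittVector p R) ^ (k * (n + 1))} := Ideal.span_singleton_pow _ _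
    _ ≤ RingHom.ker (truncate (n + 1)) :=
      (Ideal.span_singleton_le_iff_mem _).mpr (natCast_pow_mem_ker_truncate hk _)

end TruncatedWittVectorProj

/-- Let `R` be a ring in which `p` is nilpotent.  Then the kernel `I_{n+1,R}` of the
projection `W_{n+1}(R) → R` is a nilpotent ideal, the induced map `Spec R → Spec W_{n+1}(R)`
is a homeomorphism, and an element of `W_{n+1}(R)` is invertible if and only if its image
in `R` is invertible. -/
theorem truncatedWittVector_proj_nilpotent_homeo_units (p : ℕ) [Fact p.Prime] (n : ℕ)
    (R : Type*) [CommRing R] (hpnil : ∃ k : ℕ, (p : R) ^ k = 0) :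
    IsNilpotent (RingHom.ker (truncatedWittVectorProj p n R)) ∧
    IsHomeomorph (PrimeSpectrum.comap (truncatedWittVectorProj p n R)) ∧
    ∀ x : TruncatedWittVector p (n + 1) R,
      IsUnit x ↔ IsUnit (truncatedWittVectorProj p n R x) := by
  obtain ⟨k, hk⟩ := hpnil
  have hnil := isNilpotent_ker_truncatedWittVectorProj (n := n) hk
  exact ⟨hnil,
    PrimeSpectrum.isHomeomorph_comap_of_surjective truncatedWittVectorProj_surjective
      (Ideal.le_nilradical_of_isNilpotent hnil),
    fun x ↦ (RingHom.isUnit_map_iff_of_surjective_of_isNilpotent_ker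
      truncatedWittVectorProj_surjective hnil x).symm⟩
end
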